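/- Let N ≥ 1 and a be integers with 1 ≤ a ≤ N, and let n, l be nonnegative integers with l ≤ n. Then ∑_{k=l+1}^{n} 2(−1)^k / ((n−k)! · (2a/N)_{n+k+1}) = (−1)^{l+1}(n−l) / ((n + a/N) · (n−l)! · (2a/N)_{n+l+1}). -/

import Mathlib

open Finset

/-! The summand `2(−1)^k / ((n−k)!·(2c)_{n+k+1})` is the forward difference of
`T j = (−1)^j (n−j) / ((n+c)·(n−j)!·(2c)_{n+j+1})`: putting both terms over the common
denominator leaves `(n−k) + (2c+n+k) = 2(n+c)` in the numerator. As `T n = 0`, the sum from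
`l+1` to `n` telescopes to `−T l`. -/

/-- The Pochhammer symbol (rising factorial) `(x)_n = x(x+1)⋯(x+n−1)`. -/
noncomputable def poch (x : ℝ) (n : ℕ) : ℝ := (ascPochhammer ℝ n).eval x

lemma poch_succ (x : ℝ) (m : ℕ) : poch x (m + 1) = poch x m * (x + m) :=
  ascPochhammer_succ_eval m x

lemma poch_pos {x : ℝ} (hx : 0 < x) (m : ℕ) : 0 < poch x m :=
  ascPochhammer_pos m x hx

noncomputable def telescopeTerm (c : ℝ) (n j : ℕ) : ℝ :=
  (-1 : ℝ) ^ j * ((n : ℝ) - j) / (((n : ℝ) + c) * (n - j).factorial * poch (2 * c) (n + j + 1))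

lemma telescopeTerm_self (c : ℝ) (n : ℕ) : telescopeTerm c n n = 0 := by
  simp [telescopeTerm]

lemma telescopeTerm_succ_sub {c : ℝ} (hc : 0 < c) {n k : ℕ} (hk : k < n) :
    telescopeTerm c n (k + 1) - telescopeTerm c n k
      = 2 * (-1 : ℝ) ^ (k + 1) / ((n - (k + 1)).factorial * poch (2 * c) (n + (k + 1) + 1)) := by
  obtain ⟨m, rfl⟩ : ∃ m, n = m + (k + 1) := ⟨n - (k + 1), by omega⟩
  have hfac : (m + (k + 1) - k).factorial = (m + 1) * m.factorial := by
    rw [show m + (k + 1) - k = m + 1 by omega, Nat.factorial_succ]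
  have hpoch : poch (2 * c) (m + (k + 1) + (k + 1) + 1)
      = poch (2 * c) (m + (k + 1) + k + 1) * (2 * c + (m + (k + 1) + k + 1 : ℕ)) := by
    rw [← poch_succ]
    congr 1
  have hP := (poch_pos (by positivity : 0 < 2 * c) (m + (k + 1) + k + 1)).ne'
  simp only [telescopeTerm, hfac, hpoch, Nat.add_sub_cancel, pow_succ]
  push_cast
  field_simp
  ring

lemma sum_Icc_two_neg_one_pow_div_factorial_poch {c : ℝ} (hc : 0 < c) {n l : ℕ} (hln : l ≤ n) :
    ∑ k ∈ Icc (l + 1) n, 2 * (-1 : ℝ) ^ k / ((n - k).factorial * poch (2 * c) (n + k + 1))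
      = -telescopeTerm c n l := by
  calc ∑ k ∈ Icc (l + 1) n, 2 * (-1 : ℝ) ^ k / ((n - k).factorial * poch (2 * c) (n + k + 1))
      = ∑ k ∈ Ico l n, (telescopeTerm c n (k + 1) - telescopeTerm c n k) := by
        rw [← Ico_add_one_right_eq_Icc, ← sum_Ico_add']
        exact sum_congr rfl fun k hk => (telescopeTerm_succ_sub hc (mem_Ico.1 hk).2).symm
    _ = -telescopeTerm c n l := by rw [sum_Ico_sub _ hln, telescopeTerm_self, zero_sub]

/-- Lemma 2.1, formula (2.2): for `1 ≤ a ≤ N` and `l ≤ n`,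
`∑_{k=l+1}^{n} 2(−1)^k / ((n−k)!·(2a/N)_{n+k+1})
  = (−1)^{l+1}(n−l) / ((n + a/N)·(n−l)!·(2a/N)_{n+l+1})`. -/
theorem sum_two_neg_one_pow_div_factorial_poch
    (N a : ℕ) (h1 : 1 ≤ a) (h2 : a ≤ N) (n l : ℕ) (hln : l ≤ n) :
    ∑ k ∈ Finset.Icc (l + 1) n,
        2 * (-1 : ℝ) ^ k /
          ((n - k).factorial * poch (2 * (a : ℝ) / N) (n + k + 1))
      = (-1 : ℝ) ^ (l + 1) * ((n : ℝ) - l) /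
          (((n : ℝ) + (a : ℝ) / N) * (n - l).factorial *
            poch (2 * (a : ℝ) / N) (n + l + 1)) := by
  have hN : 0 < N := by omega
  have hc : 0 < (a : ℝ) / N := by positivity
  rw [mul_div_assoc (2 : ℝ), sum_Icc_two_neg_one_pow_div_factorial_poch hc hln, telescopeTerm, pow_succ]
  ring
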